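/- arXiv:2011.02743 — 2 statements merged into one kernel-verified Lean document; each statement's English description precedes it below -/
import Mathlib

section
/- Let C be the edge set of a simple cycle on vertex set W ⊆ V with |W| ≥ 3 and 1 ∈ V a fixed depot vertex. Let (y,x) be the incidence vector of C. Then for every subset H ⊆ V with 3 ≤ |H| ≤ |V|−3 and every l ∈ H, r ∈ V−H, the subcycle elimination constraint holds: x(δ(H)) − 2 y(l) − 2 y(r) ≥ −2, where δ(H) is the set of edges of the complete graph with exactly one endpoint in H. -/
open Finset
open scoped Classical

noncomputable section

variable {V : Type*} [Fintype V] [DecidableEq V]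

/-- The set of edges of `G` with exactly one endpoint in `T` (the cut `δ(T)`). -/
def cutEdges (G : SimpleGraph V) (T : Finset V) : Finset (Sym2 V) :=
  G.edgeFinset.filter fun e => (∃ a ∈ e, a ∈ T) ∧ (∃ b ∈ e, b ∉ T)

/-- The set of edges of `G` with both endpoints in `T` (denoted `E(T)`). -/
def innerEdges (G : SimpleGraph V) (T : Finset V) : Finset (Sym2 V) :=
  G.edgeFinset.filter fun e => ∀ a ∈ e, a ∈ T

/-- The set of edges of `G` incident to `v` (the star `δ(v)`). -/
def incEdges (G : SimpleGraph V) (v : V) : Finset (Sym2 V) :=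
  G.edgeFinset.filter fun e => v ∈ e

/-- `C` is the edge set of a simple cycle (a connected 2-regular graph) with vertex set `W`. -/
def IsCycleOn (C : Finset (Sym2 V)) (W : Finset V) : Prop :=
  3 ≤ W.card ∧ (∀ e ∈ C, ¬ e.IsDiag) ∧ (∀ e ∈ C, ∀ v ∈ e, v ∈ W) ∧
  (∀ v ∈ W, (C.filter fun e => v ∈ e).card = 2) ∧
  ((SimpleGraph.fromEdgeSet (↑C : Set (Sym2 V))).induce (↑W : Set V)).Connected

lemma walk_cross {α : Type*} {G : SimpleGraph α} {a b : α} (p : G.Walk a b)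
    (P : α → Prop) (ha : P a) (hb : ¬ P b) :
    ∃ u v, G.Adj u v ∧ P u ∧ ¬ P v := by
  induction p with
  | nil => exact absurd ha hb
  | @cons u v w h p ih =>
    by_cases h2 : P v
    · exact ih h2 hb
    · exact ⟨u, v, h, ha, h2⟩

lemma filter_mem_card_mod_two {V : Type*} [DecidableEq V] (H : Finset V) (a b : V)
    (hab : a ≠ b) :
    (H.filter (· ∈ (s(a,b) : Sym2 V))).card % 2
      = if (∃ x ∈ (s(a,b) : Sym2 V), x ∈ H) ∧ (∃ x ∈ (s(a,b) : Sym2 V), x ∉ H) then 1 else 0 := by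
  classical
  by_cases ha : a ∈ H <;> by_cases hb : b ∈ H
  · have h1 : H.filter (· ∈ (s(a,b) : Sym2 V)) = {a, b} := by
      ext v; simp [Sym2.mem_iff]; aesop
    rw [h1]
    rw [Finset.card_insert_of_notMem (by simp [hab]), Finset.card_singleton]
    simp [Sym2.mem_iff, ha, hb]
  · have h1 : H.filter (· ∈ (s(a,b) : Sym2 V)) = {a} := by
      ext v; simp [Sym2.mem_iff]; aesop
    rw [h1, Finset.card_singleton]
    simp [ha, hb]
  · have h1 : H.filter (· ∈ (s(a,b) : Sym2 V)) = {b} := by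
      ext v; simp [Sym2.mem_iff]; aesop
    rw [h1, Finset.card_singleton]
    simp [ha, hb]
  · have h1 : H.filter (· ∈ (s(a,b) : Sym2 V)) = ∅ := by
      ext v; simp [Sym2.mem_iff]; aesop
    rw [h1, Finset.card_empty]
    simp [ha, hb]

/-- The incidence vector of a simple cycle satisfies every subcycle elimination
constraint `x(δ(H)) − 2 y l − 2 y r ≥ −2`. -/
theorem cycle_satisfies_SEC (C : Finset (Sym2 V)) (W : Finset V)
    (hC : IsCycleOn C W) (y : V → ℝ) (x : Sym2 V → ℝ)
    (hy : ∀ v, y v = if v ∈ W then 1 else 0)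
    (hx : ∀ e, x e = if e ∈ C then 1 else 0)
    (H : Finset V) (hH3 : 3 ≤ H.card) (hH3' : H.card ≤ Fintype.card V - 3)
    (l r : V) (hl : l ∈ H) (hr : r ∉ H) :
    -2 ≤ (∑ e ∈ cutEdges (⊤ : SimpleGraph V) H, x e) - 2 * y l - 2 * y r := by
  obtain ⟨hW3, hdiag, hinc, hdeg, hconn⟩ := hC
  set cross : Sym2 V → Prop := fun e => (∃ a ∈ e, a ∈ H) ∧ (∃ b ∈ e, b ∉ H) with hcrossdef
  set n : ℕ := (C.filter fun e => cross e).card with hn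
  -- the sum equals n
  have hsum : (∑ e ∈ cutEdges (⊤ : SimpleGraph V) H, x e) = (n : ℝ) := by
    have h1 : ∀ e ∈ cutEdges (⊤ : SimpleGraph V) H, x e = if e ∈ C then 1 else 0 :=
      fun e _ => hx e
    rw [Finset.sum_congr rfl h1, Finset.sum_boole]
    have hset : (cutEdges (⊤ : SimpleGraph V) H).filter (fun e => e ∈ C)
        = C.filter fun e => cross e := by
      ext e
      simp only [cutEdges, Finset.mem_filter, SimpleGraph.mem_edgeFinset,
        SimpleGraph.edgeSet_top, Set.mem_setOf_eq, hcrossdef]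
      constructor
      · rintro ⟨⟨_, h2⟩, h3⟩; exact ⟨h3, h2⟩
      · rintro ⟨h3, h2⟩; exact ⟨⟨hdiag e h3, h2⟩, h3⟩
    rw [hset]
  rw [hsum]
  have hy1 : ∀ v, 0 ≤ y v ∧ y v ≤ 1 := by
    intro v; rw [hy v]; split <;> norm_num
  by_cases hlW : l ∈ W
  · by_cases hrW : r ∈ W
    · -- hard case: show 2 ≤ n
      -- parity
      have hmod : ∀ e ∈ C, (H.filter (· ∈ e)).card % 2 = if cross e then 1 else 0 := by
        intro e he
        induction e using Sym2.ind with
        | _ a b =>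
          have hab : a ≠ b := by
            have := hdiag _ he
            simpa [Sym2.mk_isDiag_iff] using this
          have := filter_mem_card_mod_two H a b hab
          convert this using 2
      have hdouble : (∑ e ∈ C, (H.filter (· ∈ e)).card)
          = ∑ v ∈ H, (C.filter fun e => v ∈ e).card := by
        simp only [Finset.card_filter]
        rw [Finset.sum_comm]
      have heven : (∑ e ∈ C, (H.filter (· ∈ e)).card) % 2 = 0 := by
        rw [hdouble]
        rw [Finset.sum_nat_mod]
        have : ∀ v ∈ H, (C.filter fun e => v ∈ e).card % 2 = 0 := by
          intro v _
          by_cases hvW : v ∈ W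
          · rw [hdeg v hvW]
          · have : (C.filter fun e => v ∈ e) = ∅ := by
              rw [Finset.filter_eq_empty_iff]
              intro e he hve
              exact hvW (hinc e he v hve)
            rw [this]; simp
        rw [Finset.sum_congr rfl this]; simp
      have hnmod : n % 2 = 0 := by
        have hnsum : n = ∑ e ∈ C, (if cross e then 1 else 0) := by
          rw [hn, Finset.card_filter]
        have : n % 2 = (∑ e ∈ C, (H.filter (· ∈ e)).card) % 2 := by
          rw [Finset.sum_nat_mod (f := fun e => (H.filter (· ∈ e)).card),
            Finset.sum_congr rfl hmod, hnsum]
        rw [this, heven]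
      -- nonempty: connectivity gives a crossing edge
      have hne : 1 ≤ n := by
        have hreach := hconn.preconnected ⟨l, hlW⟩ ⟨r, hrW⟩
        obtain ⟨p⟩ := hreach
        obtain ⟨u, v, hadj, hu, hv⟩ := walk_cross p (fun w => (w : V) ∈ H) hl hr
        have hadj' : (SimpleGraph.fromEdgeSet (↑C : Set (Sym2 V))).Adj u.val v.val := hadj
        rw [SimpleGraph.fromEdgeSet_adj] at hadj'
        have hmem : s(u.val, v.val) ∈ C.filter fun e => cross e := by
          rw [Finset.mem_filter]
          exact ⟨Finset.mem_coe.mp hadj'.1, ⟨u.val, by simp, hu⟩, ⟨v.val, by simp, hv⟩⟩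
        rw [hn]
        exact Finset.card_pos.mpr ⟨_, hmem⟩
      have h2n : 2 ≤ n := by omega
      rw [hy l, hy r, if_pos hlW, if_pos hrW]
      have : (2 : ℝ) ≤ (n : ℝ) := by exact_mod_cast h2n
      linarith
    · have : y r = 0 := by rw [hy r, if_neg hrW]
      have h0 : (0:ℝ) ≤ (n:ℝ) := Nat.cast_nonneg n
      have := (hy1 l).2
      linarith [this, h0, (hy1 l).1]
  · have : y l = 0 := by rw [hy l, if_neg hlW]
    have h0 : (0:ℝ) ≤ (n:ℝ) := Nat.cast_nonneg n
    linarith [(hy1 r).2, (hy1 r).1]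
end
end

section
/- Let (y,x) be the incidence vector of a simple cycle C on vertex set W in a complete graph on V. Let ⟨H, {T_1,…,T_t}, L, R⟩ be a comb: t ≥ 3 odd, the T_i pairwise disjoint, each T_i intersects both H and V−H, L = {l_i} with l_i ∈ T_i ∩ H, R = {r_i} with r_i ∈ T_i − H. Then the comb inequality holds: x(δ(H)) + ∑_{j=1}^t x(δ(T_j)) − 2 y(R) − 2 y(L) ≥ 1 − t, where y(S) = ∑_{v∈S} y(v). -/
open Finset
open scoped Classical

noncomputable section

variable {V : Type*} [Fintype V] [DecidableEq V]

/-!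
Write `G` for the cycle viewed as a graph. Since all degrees of `G` are `0` or `2`, the handshake
identity `∑_{v ∈ S} deg v = 2 |E(S)| + |δ(S)|` makes every cut `δ_G(S)` even, and connectivity makes
it nonempty, hence of size at least `2`, whenever `S` separates two vertices of the cycle.

If no tooth contains the whole cycle, each tooth satisfies
`2 (y(lᵢ) + y(rᵢ)) ≤ x(δ(Tᵢ)) + 2 [E(Tᵢ) ∩ δ_G(H) ≠ ∅]`: a tooth meeting the cycle is crossed by it,
and if both `lᵢ` and `rᵢ` are on the cycle then `δ(Tᵢ ∩ H)` and `δ(Tᵢ \ H)` both have size `≥ 2`,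
while their sizes add up to `|δ(Tᵢ)| + 2 |E(Tᵢ) ∩ δ(H)|`. The teeth are disjoint, so at most
`min (x(δ(H)), t)` of them have a cycle edge inside crossing `H`, and as `x(δ(H)) + t` is odd this
is at most `(x(δ(H)) + t - 1) / 2`. If some tooth contains the cycle, only its link and its root can
lie on the cycle, and if both do, `H` separates them, so `x(δ(H)) ≥ 2`, which together with
`t ≥ 3` pays for `2 y(l) + 2 y(r) ≤ 4`.
-/

open SimpleGraph Function

section General

variable (G : SimpleGraph V)

theorem cutEdges_subset (S : Finset V) : cutEdges G S ⊆ G.edgeFinset := filter_subset _ _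

theorem innerEdges_subset (S : Finset V) : innerEdges G S ⊆ G.edgeFinset := filter_subset _ _

theorem mk_mem_cutEdges {S : Finset V} {u v : V} :
    s(u, v) ∈ cutEdges G S ↔ G.Adj u v ∧ (u ∈ S ↔ v ∉ S) := by
  simp only [cutEdges, mem_filter, mem_edgeFinset, mem_edgeSet, Sym2.mem_iff,
    exists_eq_or_imp, exists_eq_left]
  tauto

theorem mk_mem_innerEdges {S : Finset V} {u v : V} :
    s(u, v) ∈ innerEdges G S ↔ G.Adj u v ∧ u ∈ S ∧ v ∈ S := by
  simp [innerEdges]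

theorem sum_card_incEdges (S : Finset V) :
    ∑ v ∈ S, #(incEdges G v) = 2 * #(innerEdges G S) + #(cutEdges G S) := by
  have hedge : ∀ e ∈ G.edgeFinset, #{v ∈ S | v ∈ e} =
      2 * (if e ∈ innerEdges G S then 1 else 0) + if e ∈ cutEdges G S then 1 else 0 := by
    intro e he
    induction e using Sym2.ind with
    | _ u v =>
      have huv : G.Adj u v := by simpa using he
      simp only [mk_mem_innerEdges, mk_mem_cutEdges]
      by_cases hu : u ∈ S <;> by_cases hv : v ∈ S <;>
        simp [filter_or, filter_eq', hu, hv, huv, huv.ne, card_insert_of_notMem]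
  calc ∑ v ∈ S, #(incEdges G v) = ∑ e ∈ G.edgeFinset, #{v ∈ S | v ∈ e} := by
        simp only [incEdges, card_filter]; exact sum_comm
    _ = _ := by
        rw [sum_congr rfl hedge, sum_add_distrib, ← mul_sum,
          ← card_eq_sum_ite (innerEdges_subset G S), ← card_eq_sum_ite (cutEdges_subset G S)]

theorem card_cutEdges_inter_add_card_cutEdges_sdiff (T H : Finset V) :
    #(cutEdges G (T ∩ H)) + #(cutEdges G (T \ H)) =
      #(cutEdges G T) + 2 * #(innerEdges G T ∩ cutEdges G H) := by
  have hX : innerEdges G T ∩ cutEdges G H ⊆ G.edgeFinset :=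
    inter_subset_left.trans (innerEdges_subset G T)
  simp only [card_eq_sum_ite (cutEdges_subset G _), card_eq_sum_ite hX, mul_sum,
    ← sum_add_distrib]
  refine sum_congr rfl fun e he => ?_
  induction e using Sym2.ind with
  | _ u v =>
    have huv : G.Adj u v := by simpa using he
    simp only [mem_inter, mk_mem_cutEdges, mk_mem_innerEdges, mem_sdiff, huv, true_and]
    by_cases huT : u ∈ T <;> by_cases huH : u ∈ H <;> by_cases hvT : v ∈ T <;>
      by_cases hvH : v ∈ H <;> simp [huT, huH, hvT, hvH]

theorem disjoint_innerEdges {S T : Finset V} (h : Disjoint S T) :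
    Disjoint (innerEdges G S) (innerEdges G T) := by
  refine disjoint_left.mpr fun e heS heT => ?_
  have hmem : e.out.1 ∈ e := Sym2.out_fst_mem e
  exact disjoint_left.mp h ((mem_filter.mp heS).2 _ hmem) ((mem_filter.mp heT).2 _ hmem)

theorem card_filter_innerEdges_inter_nonempty_le {ι : Type*} [Fintype ι] {T : ι → Finset V}
    (hT : Pairwise (Disjoint on T)) (F : Finset (Sym2 V)) :
    #{i | (innerEdges G (T i) ∩ F).Nonempty} ≤ #F := by
  refine (card_le_card_biUnion ?_ fun i hi => (mem_filter.mp hi).2).trans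
    (card_le_card (biUnion_subset.mpr fun i _ => inter_subset_right))
  exact fun i _ j _ hij => (disjoint_innerEdges G (hT hij)).mono inter_subset_left inter_subset_left

end General

theorem cutEdges_top_inter (C : Finset (Sym2 V)) (S : Finset V) :
    cutEdges ⊤ S ∩ C = cutEdges (fromEdgeSet C) S := by
  ext e
  induction e using Sym2.ind with
  | _ u v =>
    simp only [mem_inter, mk_mem_cutEdges, top_adj, fromEdgeSet_adj, mem_coe]
    tauto

namespace IsCycleOn

variable {C : Finset (Sym2 V)} {W : Finset V} {H : Finset V}

theorem incEdges_fromEdgeSet (hC : IsCycleOn C W) (v : V) :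
    incEdges (fromEdgeSet C) v = {e ∈ C | v ∈ e} := by
  ext e
  simp only [incEdges, mem_filter, mem_edgeFinset, edgeSet_fromEdgeSet, Set.mem_sdiff, mem_coe,
    Sym2.mem_diagSet]
  exact ⟨fun h => ⟨h.1.1, h.2⟩, fun h => ⟨⟨h.1, hC.2.1 e h.1⟩, h.2⟩⟩

theorem card_incEdges (hC : IsCycleOn C W) (v : V) :
    #(incEdges (fromEdgeSet C) v) = if v ∈ W then 2 else 0 := by
  rw [hC.incEdges_fromEdgeSet]
  split_ifs with hv
  · exact hC.2.2.2.1 v hv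
  · exact card_eq_zero.mpr (filter_eq_empty_iff.mpr fun e he hve => hv (hC.2.2.1 e he v hve))

theorem even_card_cutEdges (hC : IsCycleOn C W) (S : Finset V) :
    Even #(cutEdges (fromEdgeSet C) S) := by
  have h := sum_card_incEdges (fromEdgeSet C) S
  simp only [hC.card_incEdges, sum_ite, sum_const_zero, sum_const, smul_eq_mul, add_zero] at h
  rw [Nat.even_iff]
  omega

theorem cutEdges_nonempty (hC : IsCycleOn C W) {S : Finset V} (hin : ∃ w ∈ W, w ∈ S)
    (hout : ∃ w ∈ W, w ∉ S) : (cutEdges (fromEdgeSet C) S).Nonempty := by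
  obtain ⟨u, huW, huS⟩ := hin
  obtain ⟨w, hwW, hwS⟩ := hout
  obtain ⟨p⟩ := hC.2.2.2.2.preconnected ⟨u, huW⟩ ⟨w, hwW⟩
  obtain ⟨d, -, hd₁, hd₂⟩ := p.exists_boundary_dart {a | (a : V) ∈ S} huS hwS
  exact ⟨s(d.fst, d.snd), (mk_mem_cutEdges _).mpr ⟨d.adj, iff_of_true hd₁ hd₂⟩⟩

theorem two_le_card_cutEdges (hC : IsCycleOn C W) {S : Finset V} (hin : ∃ w ∈ W, w ∈ S)
    (hout : ∃ w ∈ W, w ∉ S) : 2 ≤ #(cutEdges (fromEdgeSet C) S) := by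
  have hpos := (hC.cutEdges_nonempty hin hout).card_pos
  obtain ⟨k, hk⟩ := hC.even_card_cutEdges S
  omega

theorem comb_tooth_inequality (hC : IsCycleOn C W) {T : Finset V} {l r : V} (hl : l ∈ T ∩ H)
    (hr : r ∈ T \ H) (hT : ¬W ⊆ T) :
    2 * ((if l ∈ W then 1 else 0) + if r ∈ W then 1 else 0) ≤
      #(cutEdges (fromEdgeSet C) T) +
        2 * if (innerEdges (fromEdgeSet C) T ∩ cutEdges (fromEdgeSet C) H).Nonempty then 1
          else 0 := by
  obtain ⟨hlT, hlH⟩ := mem_inter.mp hl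
  obtain ⟨hrT, hrH⟩ := mem_sdiff.mp hr
  have hone : l ∈ W ∨ r ∈ W → 2 ≤ #(cutEdges (fromEdgeSet C) T) := by
    rintro (hlW | hrW)
    · exact hC.two_le_card_cutEdges ⟨l, hlW, hlT⟩ (not_subset.mp hT)
    · exact hC.two_le_card_cutEdges ⟨r, hrW, hrT⟩ (not_subset.mp hT)
  -- when both `l` and `r` lie on the cycle, it crosses `T ∩ H` and `T \ H` at least twice each
  have htwo : l ∈ W → r ∈ W →
      4 ≤ #(cutEdges (fromEdgeSet C) T) +
        2 * #(innerEdges (fromEdgeSet C) T ∩ cutEdges (fromEdgeSet C) H) := by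
    intro hlW hrW
    rw [← card_cutEdges_inter_add_card_cutEdges_sdiff]
    have := hC.two_le_card_cutEdges ⟨l, hlW, hl⟩ ⟨r, hrW, fun h => hrH (mem_inter.mp h).2⟩
    have := hC.two_le_card_cutEdges ⟨r, hrW, hr⟩ ⟨l, hlW, fun h => (mem_sdiff.mp h).2 hlH⟩
    omega
  by_cases hlW : l ∈ W <;> by_cases hrW : r ∈ W <;>
    simp only [hlW, hrW, if_true, if_false, true_or, or_true, or_self, forall_const] at hone htwo ⊢
  · split_ifs with hX
    · omega
    · rw [not_nonempty_iff_eq_empty.mp hX, card_empty] at htwo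
      omega
  all_goals omega

variable {ι : Type*} [Fintype ι] {T : ι → Finset V} {l r : ι → V}

theorem comb_inequality_card_of_forall_not_subset (hC : IsCycleOn C W)
    (hT : Pairwise (Disjoint on T)) (hl : ∀ i, l i ∈ T i ∩ H)
    (hr : ∀ i, r i ∈ T i \ H) (hodd : Odd (Fintype.card ι)) (hW : ∀ i, ¬W ⊆ T i) :
    2 * #{i | r i ∈ W} + 2 * #{i | l i ∈ W} + 1 ≤
      #(cutEdges (fromEdgeSet C) H) + ∑ i, #(cutEdges (fromEdgeSet C) (T i)) +
        Fintype.card ι := by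
  set m := #{i | (innerEdges (fromEdgeSet C) (T i) ∩ cutEdges (fromEdgeSet C) H).Nonempty}
  have hsum : 2 * #{i | l i ∈ W} + 2 * #{i | r i ∈ W} ≤
      ∑ i, #(cutEdges (fromEdgeSet C) (T i)) + 2 * m := by
    calc 2 * #{i | l i ∈ W} + 2 * #{i | r i ∈ W}
        = ∑ i, 2 * ((if l i ∈ W then 1 else 0) + if r i ∈ W then 1 else 0) := by
          simp only [card_filter, mul_add, mul_sum, sum_add_distrib]
      _ ≤ _ := sum_le_sum fun i _ => hC.comb_tooth_inequality (hl i) (hr i) (hW i)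
      _ = _ := by simp only [m, card_filter, mul_sum, sum_add_distrib]
  have hmH : m ≤ #(cutEdges (fromEdgeSet C) H) :=
    card_filter_innerEdges_inter_nonempty_le _ hT _
  have hmt : m ≤ Fintype.card ι := card_le_univ _
  -- `δ(H)` is even and `t` odd, so `2 m ≤ δ(H) + t` improves to `2 m ≤ δ(H) + t - 1`
  obtain ⟨a, ha⟩ := hC.even_card_cutEdges H
  obtain ⟨b, hb⟩ := hodd
  omega

theorem comb_inequality_card_of_subset (hC : IsCycleOn C W)
    (hT : Pairwise (Disjoint on T)) (hl : ∀ i, l i ∈ T i ∩ H)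
    (hr : ∀ i, r i ∈ T i \ H) (h3 : 3 ≤ Fintype.card ι) {i₀ : ι} (hW : W ⊆ T i₀) :
    2 * #{i | r i ∈ W} + 2 * #{i | l i ∈ W} + 1 ≤
      #(cutEdges (fromEdgeSet C) H) + ∑ i, #(cutEdges (fromEdgeSet C) (T i)) +
        Fintype.card ι := by
  have hcount : ∀ v : ι → V, (∀ i, v i ∈ T i) → #{i | v i ∈ W} ≤ if v i₀ ∈ W then 1 else 0 := by
    intro v hv
    have hsub : ({i | v i ∈ W} : Finset ι) ⊆ ({i₀} : Finset ι).filter (v · ∈ W) := by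
      intro i hi
      have hiW := (mem_filter.mp hi).2
      obtain rfl : i = i₀ := by_contra fun hne => disjoint_left.mp (hT hne) (hv i) (hW hiW)
      exact mem_filter.mpr ⟨mem_singleton_self _, hiW⟩
    refine (card_le_card hsub).trans ?_
    rw [filter_singleton]
    split_ifs <;> simp
  have hL := hcount l fun i => (mem_inter.mp (hl i)).1
  have hR := hcount r fun i => (mem_sdiff.mp (hr i)).1
  have hH : l i₀ ∈ W → r i₀ ∈ W → 2 ≤ #(cutEdges (fromEdgeSet C) H) := fun hlW hrW =>
    hC.two_le_card_cutEdges ⟨l i₀, hlW, (mem_inter.mp (hl i₀)).2⟩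
      ⟨r i₀, hrW, (mem_sdiff.mp (hr i₀)).2⟩
  by_cases hlW : l i₀ ∈ W <;> by_cases hrW : r i₀ ∈ W <;>
    simp only [hlW, hrW, if_true, if_false, forall_const, false_implies, implies_true]
      at hL hR hH <;> omega


theorem comb_inequality_card (hC : IsCycleOn C W) (hT : Pairwise (Disjoint on T))
    (hl : ∀ i, l i ∈ T i ∩ H) (hr : ∀ i, r i ∈ T i \ H) (h3 : 3 ≤ Fintype.card ι)
    (hodd : Odd (Fintype.card ι)) :
    2 * #{i | r i ∈ W} + 2 * #{i | l i ∈ W} + 1 ≤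
      #(cutEdges (fromEdgeSet C) H) + ∑ i, #(cutEdges (fromEdgeSet C) (T i)) +
        Fintype.card ι := by
  by_cases hW : ∃ i, W ⊆ T i
  · obtain ⟨i₀, hi₀⟩ := hW
    exact hC.comb_inequality_card_of_subset hT hl hr h3 hi₀
  · exact hC.comb_inequality_card_of_forall_not_subset hT hl hr hodd (not_exists.mp hW)

end IsCycleOn

theorem cycle_satisfies_comb_general (C : Finset (Sym2 V)) (W : Finset V)
    (hC : IsCycleOn C W) (y : V → ℝ) (x : Sym2 V → ℝ)
    (hy : ∀ v, y v = if v ∈ W then 1 else 0)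
    (hx : ∀ e, x e = if e ∈ C then 1 else 0)
    (H : Finset V) (t : ℕ) (ht3 : 3 ≤ t) (htodd : Odd t)
    (T : Fin t → Finset V)
    (hdisj : ∀ i j : Fin t, i ≠ j → Disjoint (T i) (T j))
    (l r : Fin t → V) (hl : ∀ i, l i ∈ T i ∩ H) (hr : ∀ i, r i ∈ T i \ H) :
    (1 : ℝ) - t ≤
      (∑ e ∈ cutEdges (⊤ : SimpleGraph V) H, x e) +
        (∑ i : Fin t, ∑ e ∈ cutEdges (⊤ : SimpleGraph V) (T i), x e) -
        2 * (∑ i : Fin t, y (r i)) - 2 * (∑ i : Fin t, y (l i)) := by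
  have hx_sum : ∀ S, ∑ e ∈ cutEdges ⊤ S, x e = #(cutEdges (fromEdgeSet C) S) := by
    intro S
    rw [sum_congr rfl fun e _ => hx e, sum_boole, filter_mem_eq_inter, cutEdges_top_inter]
  have hy_sum : ∀ v : Fin t → V, ∑ i, y (v i) = #{i | v i ∈ W} := by
    intro v
    rw [sum_congr rfl fun i _ => hy (v i), sum_boole]
  have key := hC.comb_inequality_card (fun i j hij => hdisj i j hij) hl hr
    (by rwa [Fintype.card_fin]) (by rwa [Fintype.card_fin])
  rw [Fintype.card_fin] at key
  simp only [hx_sum, hy_sum]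
  have keyR : (2 * #{i | r i ∈ W} + 2 * #{i | l i ∈ W} + 1 : ℝ) ≤
      #(cutEdges (fromEdgeSet C) H) + ∑ i, (#(cutEdges (fromEdgeSet C) (T i)) : ℝ) + t := by
    exact_mod_cast key
  linarith

/-- The comb inequality holds for the incidence vector of a simple cycle:
`x(δ(H)) + ∑ⱼ x(δ(Tⱼ)) − 2 y(R) − 2 y(L) ≥ 1 − t`. -/
theorem cycle_satisfies_comb (C : Finset (Sym2 V)) (W : Finset V)
    (hC : IsCycleOn C W) (y : V → ℝ) (x : Sym2 V → ℝ)
    (hy : ∀ v, y v = if v ∈ W then 1 else 0)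
    (hx : ∀ e, x e = if e ∈ C then 1 else 0)
    (H : Finset V) (t : ℕ) (ht3 : 3 ≤ t) (htodd : Odd t)
    (T : Fin t → Finset V)
    (hdisj : ∀ i j : Fin t, i ≠ j → Disjoint (T i) (T j))
    (hin : ∀ i, (T i ∩ H).Nonempty) (hout : ∀ i, (T i \ H).Nonempty)
    (l r : Fin t → V) (hl : ∀ i, l i ∈ T i ∩ H) (hr : ∀ i, r i ∈ T i \ H) :
    (1 : ℝ) - t ≤
      (∑ e ∈ cutEdges (⊤ : SimpleGraph V) H, x e) +
        (∑ i : Fin t, ∑ e ∈ cutEdges (⊤ : SimpleGraph V) (T i), x e) -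
        2 * (∑ i : Fin t, y (r i)) - 2 * (∑ i : Fin t, y (l i)) :=
  cycle_satisfies_comb_general C W hC y x hy hx H t ht3 htodd T hdisj l r hl hr
end
end
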